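/- Let q, r ≥ 2, 0 < α < 1 and n ≥ 1, with S = S^{(n)} ⊆ DL(q,r), ∂S, S₁, S₂, ∂*S₁, ∂*S₂, ∂S₁, ∂S₂, a₁, a₂ as in the context. Then every function h : S → ℝ that is P_α-harmonic at every point of S° = S ∖ ∂S can be written as h(x₁x₂) = h₁(x₁) + h₂(x₂) for all x₁x₂ ∈ S, where h₁(x₁) = ∑_{y₁ ∈ ∂*S₁} F₁^{∂S₁}(x₁,y₁)·h(y₁a₂) and h₂(x₂) = ∑_{y₂ ∈ ∂*S₂} F₂^{∂S₂}(x₂,y₂)·h(a₁y₂). -/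

import Mathlib

open scoped Classical

noncomputable section

namespace LampDL

variable {X : Type*}

/-- `n`-step transition probabilities of the Markov chain with transition matrix `p`. -/
def matpow (p : X → X → ℝ) : ℕ → X → X → ℝ
  | 0 => fun x y => if x = y then 1 else 0
  | n + 1 => fun x y => ∑' z, p x z * matpow p n z y

/-- A (countable) stochastic transition matrix. -/
def IsStochastic (p : X → X → ℝ) : Prop :=
  (∀ x y, 0 ≤ p x y) ∧ ∀ x, HasSum (p x) 1

/-- Irreducibility: some power has positive entry for every pair. -/
def IsIrreducible (p : X → X → ℝ) : Prop := ∀ x y, ∃ n, 0 < matpow p n x y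

/-- `hitBefore p A y n x` is the probability that the chain started at `x` avoids `A`
at all times `< n` and is at `y` at time `n`.  For `y ∈ A`, summing over `n` yields
`F^A(x,y) = Pr_x[s^y ≤ s^A, s^y < ∞]`. -/
def hitBefore (p : X → X → ℝ) (A : Set X) (y : X) : ℕ → X → ℝ
  | 0 => fun x => if x = y then 1 else 0
  | n + 1 => fun x => if x ∈ A then 0 else ∑' z, p x z * hitBefore p A y n z

/-- `F^A(x,y) = Pr_x[s^y ≤ s^A, s^y < ∞]` (for `y ∈ A`). -/
def FA (p : X → X → ℝ) (A : Set X) (x y : X) : ℝ := ∑' n, hitBefore p A y n x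

/-- `F(x,y) = Pr_x[s^y < ∞]`, the probability of ever hitting `y` from `x`. -/
def Fhit (p : X → X → ℝ) (x y : X) : ℝ := FA p {y} x y

/-- A function is `P`-harmonic if `∑_y p(x,y) h(y) = h(x)` for every `x`. -/
def IsHarmonic (p : X → X → ℝ) (h : X → ℝ) : Prop := ∀ x, ∑' y, p x y * h y = h x

/-- A minimal harmonic function (w.r.t. the reference point `o`). -/
def IsMinimalHarmonic (p : X → X → ℝ) (o : X) (h : X → ℝ) : Prop :=
  IsHarmonic p h ∧ (∀ x, 0 ≤ h x) ∧ h o = 1 ∧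
    ∀ h₁ : X → ℝ, IsHarmonic p h₁ → (∀ x, 0 ≤ h₁ x) → (∀ x, h₁ x ≤ h x) →
      ∃ c : ℝ, ∀ x, h₁ x = c * h x

/-- Vertices of the homogeneous tree `T_q`, modelled as pairs `(σ, k)` where
`σ : ℤ → ZMod q` is finitely supported with `σ n = 0` for `n > 0`. -/
structure TV (q : ℕ) where
  σ : ℤ → ZMod q
  k : ℤ
  fin : (Function.support σ).Finite
  upz : ∀ n : ℤ, 0 < n → σ n = 0

lemma fin_aux {q : ℕ} (g : ℤ → ZMod q) (hg : (Function.support g).Finite)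
    (f : ℤ → ℤ) (hf : Function.Injective f) :
    (Function.support fun n => if n ≤ 0 then g (f n) else 0).Finite := by
  refine Set.Finite.subset (hg.preimage hf.injOn) ?_
  intro n hn
  simp only [Function.mem_support] at hn
  by_cases hle : n ≤ 0
  · simp only [hle, if_true] at hn
    simpa [Set.mem_preimage, Function.mem_support] using hn
  · simp [hle] at hn

/-- The predecessor `x⁻` of a vertex of `T_q` (w.r.t. the reference end `ω`). -/
def pred {q : ℕ} (x : TV q) : TV q where
  σ := fun n => if n ≤ 0 then x.σ (n - 1) else 0
  k := x.k - 1
  fin := fin_aux x.σ x.fin (fun n => n - 1) sub_left_injective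
  upz := fun n hn => by simp [not_le.mpr hn]

/-- The vertex on the geodesic `ω o` at Busemann level `k` (zero configuration). -/
def rootAt (q : ℕ) (k : ℤ) : TV q := ⟨fun _ => 0, k, by simp, fun _ _ => rfl⟩

/-- The Diestel–Leader graph `DL(q,r)`. -/
def DL (q r : ℕ) := {x : TV q × TV r // x.1.k + x.2.k = 0}

/-- The root `o = o₁o₂` of `DL(q,r)`. -/
def oDL (q r : ℕ) : DL q r := ⟨(rootAt q 0, rootAt r 0), by simp [rootAt]⟩

/-- The projected transition matrix `P₁ = P_{1,α}` on `T_q`. -/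
def p1 (q : ℕ) (α : ℝ) (x y : TV q) : ℝ :=
  if pred y = x then α / (q : ℝ) else if y = pred x then 1 - α else 0

/-- The projected transition matrix `P₂ = P_{2,1-α}` on `T_r`. -/
def p2 (r : ℕ) (α : ℝ) (x y : TV r) : ℝ :=
  if y = pred x then α else if pred y = x then (1 - α) / (r : ℝ) else 0

/-- The transition matrix `P_α` on `DL(q,r)`. -/
def pDL (q r : ℕ) (α : ℝ) (x y : DL q r) : ℝ :=
  if pred y.val.1 = x.val.1 ∧ y.val.2 = pred x.val.2 then α / (q : ℝ)
  else if y.val.1 = pred x.val.1 ∧ pred y.val.2 = x.val.2 then (1 - α) / (r : ℝ)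
  else 0


/-- Ends `ξ ∈ ∂*T_q`: configurations whose support is bounded below. -/
def BoundedBelowSupp (q : ℕ) (ξ : ℤ → ZMod q) : Prop := ∃ N : ℤ, ∀ n < N, ξ n = 0

/-- Configurations whose support is bounded above. -/
def BoundedAboveSupp (q : ℕ) (ξ : ℤ → ZMod q) : Prop := ∃ N : ℤ, ∀ n > N, ξ n = 0

/-- The confluent level `b(x,ξ)` (level of `x ⋏ ξ` w.r.t. `ω`) of a vertex `x ∈ T_q`
and an end `ξ ∈ ∂*T_q`. -/
def bconf (q : ℕ) (x : TV q) (ξ : ℤ → ZMod q) : ℤ :=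
  sInf ({m : ℤ | m ≤ x.k ∧ ξ (m + 1) ≠ x.σ (m + 1 - x.k)} ∪ {x.k})

/-- `F₁⁻ = F₁(x,x⁻) = min {1, (1-α)/α}`. -/
def F1m (α : ℝ) : ℝ := min 1 ((1 - α) / α)
/-- `F₁⁺ = F₁(x⁻,x) = min {1/q, α/((1-α)q)}`. -/
def F1p (q : ℕ) (α : ℝ) : ℝ := min (1 / (q : ℝ)) (α / ((1 - α) * (q : ℝ)))
/-- `F₂⁻ = min {1, α/(1-α)}`. -/
def F2m (α : ℝ) : ℝ := min 1 (α / (1 - α))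
/-- `F₂⁺ = min {1/r, (1-α)/(αr)}`. -/
def F2p (r : ℕ) (α : ℝ) : ℝ := min (1 / (r : ℝ)) ((1 - α) / (α * (r : ℝ)))

/-- The Martin kernel `K₁(·,ξ₁)` on `T_q`, `ξ₁ ∈ ∂*T_q`. -/
def K1 (q : ℕ) (α : ℝ) (x : TV q) (ξ : ℤ → ZMod q) : ℝ :=
  F1m α ^ x.k * (F1m α * F1p q α) ^ (bconf q (rootAt q 0) ξ - bconf q x ξ)

/-- The Martin kernel `K₂(·,ξ₂)` on `T_r`, `ξ₂ ∈ ∂*T_r`. -/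
def K2 (r : ℕ) (α : ℝ) (x : TV r) (ξ : ℤ → ZMod r) : ℝ :=
  F2m α ^ x.k * (F2m α * F2p r α) ^ (bconf r (rootAt r 0) ξ - bconf r x ξ)

/-- The vertex `u_m = (σ_m, m)` on the geodesic from `ω` to the end encoded by `ξ`. -/
def rayVertex (q : ℕ) (ξ : ℤ → ZMod q) (hξ : BoundedBelowSupp q ξ) (m : ℤ) : TV q where
  σ := fun n => if n ≤ 0 then ξ (m + n) else 0
  k := m
  fin := by
    obtain ⟨N, hN⟩ := hξ
    apply Set.Finite.subset (Set.finite_Icc (N - m) 0)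
    intro n hn
    simp only [Function.mem_support] at hn
    by_cases hle : n ≤ 0
    · simp only [hle, if_true] at hn
      have : ¬ (m + n < N) := fun hc => hn (hN _ hc)
      exact Set.mem_Icc.mpr ⟨by omega, hle⟩
    · simp [hle] at hn
  upz := fun n hn => by simp [not_le.mpr hn]

/-- The rooted subtree `S₁ = S₁^{(n)} ⊆ T_q` with root `a₁ = (0,-n)`. -/
def S1 (q : ℕ) (n : ℕ) : Set (TV q) :=
  {x | -(n : ℤ) ≤ x.k ∧ x.k ≤ (n : ℤ) ∧ pred^[(x.k + (n : ℤ)).toNat] x = rootAt q (-(n : ℤ))}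

/-- The set of leaves `∂*S₁` of `S₁^{(n)}`. -/
def S1leaves (q : ℕ) (n : ℕ) : Set (TV q) := {x | x ∈ S1 q n ∧ x.k = (n : ℤ)}

/-- The boundary `∂S₁ = {a₁} ∪ ∂*S₁` of `S₁^{(n)}`. -/
def S1bd (q : ℕ) (n : ℕ) : Set (TV q) := insert (rootAt q (-(n : ℤ))) (S1leaves q n)

/-- The horocyclic product `S = S^{(n)}` of `S₁` and `S₂` inside `DL(q,r)`. -/
def Sdl (q r : ℕ) (n : ℕ) : Set (DL q r) := {x | x.val.1 ∈ S1 q n ∧ x.val.2 ∈ S1 r n}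

/-- The boundary `∂S = (∂*S₁ × {a₂}) ∪ ({a₁} × ∂*S₂)` of `S^{(n)}`. -/
def Sbd (q r : ℕ) (n : ℕ) : Set (DL q r) :=
  {x | (x.val.1 ∈ S1leaves q n ∧ x.val.2 = rootAt r (-(n : ℤ))) ∨
       (x.val.1 = rootAt q (-(n : ℤ)) ∧ x.val.2 ∈ S1leaves r n)}

/-- A leaf `y₁ ∈ ∂*S₁` together with `a₂` gives a vertex `y₁a₂` of `DL(q,r)`. -/
def liftLeaf1 (q r : ℕ) (n : ℕ) (y : TV q) (hy : y ∈ S1leaves q n) : DL q r :=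
  ⟨(y, rootAt r (-(n : ℤ))), by have h2 := hy.2; show y.k + (-(n : ℤ)) = 0; omega⟩

/-- The vertex `a₁y₂` of `DL(q,r)` for a leaf `y₂ ∈ ∂*S₂`. -/
def liftLeaf2 (q r : ℕ) (n : ℕ) (y : TV r) (hy : y ∈ S1leaves r n) : DL q r :=
  ⟨(rootAt q (-(n : ℤ)), y), by have h2 := hy.2; show (-(n : ℤ)) + y.k = 0; omega⟩



/-- Elements of the lamplighter group `Γ = ℤ_q ≀ ℤ`: pairs `(η,k)` with `η`
finitely supported. -/
structure LP (q : ℕ) where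
  η : ℤ → ZMod q
  k : ℤ
  fin : (Function.support η).Finite

/-- The identity element `e = (0,0)` of `ℤ_q ≀ ℤ`. -/
def eLP (q : ℕ) : LP q := ⟨fun _ => 0, 0, by simp⟩

/-- Multiplication in `ℤ_q ≀ ℤ`: `(η,k)(η',k') = (η + η'(· − k), k + k')`. -/
def lmul {q : ℕ} (g h : LP q) : LP q where
  η := fun n => g.η n + h.η (n - g.k)
  k := g.k + h.k
  fin := by
    have hinj : Function.Injective (fun n : ℤ => n - g.k) := sub_left_injective
    apply Set.Finite.subset (Set.Finite.union g.fin (h.fin.preimage hinj.injOn))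
    intro n hn
    simp only [Function.mem_support] at hn
    by_cases h1 : g.η n = 0
    · right
      simp only [Set.mem_preimage, Function.mem_support]
      intro h2
      exact hn (by rw [h1, h2, add_zero])
    · left; exact h1

/-- The configuration `δ_j^ℓ` with value `ℓ` at `j` and `0` elsewhere. -/
def deltaCfg (q : ℕ) (j : ℤ) (ℓ : ZMod q) : ℤ → ZMod q := fun n => if n = j then ℓ else 0

/-- The group element `(δ_j^ℓ, k) ∈ ℤ_q ≀ ℤ`. -/
def deltaLP (q : ℕ) (j : ℤ) (ℓ : ZMod q) (k : ℤ) : LP q :=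
  ⟨deltaCfg q j ℓ, k, by
    apply Set.Finite.subset (Set.finite_singleton j)
    intro n hn
    simp only [Function.mem_support, deltaCfg] at hn
    by_cases h : n = j
    · simpa using h
    · simp [h] at hn⟩


/-- Adjacency in the tree `T_q`: one vertex is the predecessor of the other. -/
def adjT {q : ℕ} (x y : TV q) : Prop := pred x = y ∨ pred y = x

/-- Adjacency in `DL(q,r)`. -/
def adjDL {q r : ℕ} (x y : DL q r) : Prop :=
  adjT x.val.1 y.val.1 ∧ adjT x.val.2 y.val.2

/-- The identification `Φ : ℤ_q ≀ ℤ → DL(q,q)`, `Φ(η,k) = (η_k⁻,k)(η_k⁺,-k)`. -/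
def Phi (q : ℕ) (g : LP q) : DL q q :=
  ⟨(⟨fun n => if n ≤ 0 then g.η (g.k + n) else 0, g.k,
      fin_aux g.η g.fin (fun n => g.k + n) (add_right_injective g.k),
      fun n hn => by simp [not_le.mpr hn]⟩,
    ⟨fun n => if n ≤ 0 then g.η (g.k + 1 - n) else 0, -g.k,
      fin_aux g.η g.fin (fun n => g.k + 1 - n) sub_right_injective,
      fun n hn => by simp [not_le.mpr hn]⟩),
   by show g.k + -g.k = 0; omega⟩

/-- The transition matrix `Q_α` of the switch–walk–switch walk on `DL^s(q,r)`. -/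
def qDL (q r : ℕ) (α : ℝ) (x y : DL q r) : ℝ :=
  if pred (pred y.val.1) = pred x.val.1 ∧ y.val.2 = pred x.val.2 then α / ((q : ℝ) ^ 2)
  else if pred y.val.1 = pred (pred x.val.1) ∧ pred y.val.2 = x.val.2 then
    (1 - α) / ((q : ℝ) * (r : ℝ))
  else 0

/-- The horocyclic product `D'` of `T_q` and `T_r` at level sum `-1`. -/
def DL' (q r : ℕ) := {x : TV q × TV r // x.1.k + x.2.k = -1}

/-- The transition matrix `P'` on `D'` (same rule as `P_α`). -/
def pDL' (q r : ℕ) (α : ℝ) (x y : DL' q r) : ℝ :=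
  if pred y.val.1 = x.val.1 ∧ y.val.2 = pred x.val.2 then α / (q : ℝ)
  else if y.val.1 = pred x.val.1 ∧ pred y.val.2 = x.val.2 then (1 - α) / (r : ℝ)
  else 0

/-- The map `x₁x₂ ↦ x₁⁻x₂` from `DL^s(q,r)` onto `D'`. -/
def toDL' {q r : ℕ} (x : DL q r) : DL' q r :=
  ⟨(pred x.val.1, x.val.2), by
    have h := x.property; show x.val.1.k - 1 + x.val.2.k = -1; omega⟩

/-- Harmonicity for the simple ("walk forward and switch, or switch and walk
backward") lamplighter walk on `ℤ_q ≀ ℤ`, whose law is uniform on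
`{(δ₁^ℓ,1), (δ₀^ℓ,-1) : ℓ ∈ ZMod q}`. -/
def SRWHarmonic (q : ℕ) [NeZero q] (h : LP q → ℝ) : Prop :=
  ∀ g : LP q,
    (∑ ℓ : ZMod q, (h (lmul g (deltaLP q 1 ℓ 1)) + h (lmul g (deltaLP q 0 ℓ (-1)))))
      / (2 * (q : ℝ)) = h g

/-- The step `(δ₀^ℓ + δ₁^m, 1)` of the switch–walk–switch walk. -/
def swsStepP (q : ℕ) (ℓ m : ZMod q) : LP q :=
  ⟨fun n => if n = 0 then ℓ else if n = 1 then m else 0, 1, by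
    apply Set.Finite.subset ((Set.finite_singleton 1).insert (0:ℤ))
    intro n hn
    simp only [Function.mem_support] at hn
    by_cases h0 : n = 0
    · simp [h0]
    · by_cases h1 : n = 1
      · simp [h1]
      · simp [h0, h1] at hn⟩

/-- The step `(δ₀^ℓ + δ_{-1}^m, -1)` of the switch–walk–switch walk. -/
def swsStepM (q : ℕ) (ℓ m : ZMod q) : LP q :=
  ⟨fun n => if n = 0 then ℓ else if n = -1 then m else 0, -1, by
    apply Set.Finite.subset ((Set.finite_singleton (-1:ℤ)).insert (0:ℤ))
    intro n hn
    simp only [Function.mem_support] at hn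
    by_cases h0 : n = 0
    · simp [h0]
    · by_cases h1 : n = (-1 : ℤ)
      · simp [h1]
      · simp [h0, h1] at hn⟩

/-- Harmonicity for the switch–walk–switch lamplighter walk on `ℤ_q ≀ ℤ`, whose law
is uniform on `{(δ₀^ℓ + δ₁^m, 1), (δ₀^ℓ + δ_{-1}^m, -1) : ℓ, m ∈ ZMod q}`. -/
def SWSHarmonic (q : ℕ) [NeZero q] (h : LP q → ℝ) : Prop :=
  ∀ g : LP q,
    (∑ ℓ : ZMod q, ∑ m : ZMod q,
        (h (lmul g (swsStepP q ℓ m)) + h (lmul g (swsStepM q ℓ m))))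
      / (2 * (q : ℝ) ^ 2) = h g

/-- The positive defect `df⁺((η,k),ξ₁)`. -/
def dfPlus (q : ℕ) (g : LP q) (ξ : ℤ → ZMod q) : ℤ :=
  sInf ({n : ℤ | n ≤ g.k ∧ ξ (n + 1) ≠ g.η (n + 1)} ∪ {g.k}) -
    sInf ({m : ℤ | m ≤ 0 ∧ ξ (m + 1) ≠ 0} ∪ {0})

/-- The negative defect `df⁻((η,k),ξ₂)`. -/
def dfMinus (q : ℕ) (g : LP q) (ξ : ℤ → ZMod q) : ℤ :=
  sSup ({m : ℤ | 0 < m ∧ ξ m ≠ 0} ∪ {0}) -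
    sSup ({n : ℤ | g.k < n ∧ ξ n ≠ g.η n} ∪ {g.k})

/-- The defect `df⊕((η,k),ξ₁)` for the switch–walk–switch walk. -/
def dfOPlus (q : ℕ) (g : LP q) (ξ : ℤ → ZMod q) : ℤ :=
  sInf ({n : ℤ | n ≤ g.k ∧ ξ n ≠ g.η n} ∪ {g.k}) -
    sInf ({m : ℤ | m ≤ 0 ∧ ξ m ≠ 0} ∪ {0})

-- ===== auxiliary development =====

lemma TV.ext' {q : ℕ} {x y : TV q} (hσ : x.σ = y.σ) (hk : x.k = y.k) : x = y := by
  cases x; cases y; simp_all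

@[simp] lemma pred_k {q : ℕ} (x : TV q) : (pred x).k = x.k - 1 := rfl

@[simp] lemma pred_σ {q : ℕ} (x : TV q) (m : ℤ) :
    (pred x).σ m = if m ≤ 0 then x.σ (m - 1) else 0 := rfl

/-- The `ℓ`-th child of a vertex. -/
def child {q : ℕ} (x : TV q) (ℓ : ZMod q) : TV q where
  σ := fun m => if m = 0 then ℓ else if m ≤ 0 then x.σ (m + 1) else 0
  k := x.k + 1
  fin := by
    apply Set.Finite.subset
      (Set.Finite.insert 0 (fin_aux x.σ x.fin (fun m => m + 1) (add_left_injective 1)))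
    intro m hm
    simp only [Function.mem_support] at hm
    by_cases h0 : m = 0
    · exact Set.mem_insert_iff.mpr (Or.inl h0)
    · refine Set.mem_insert_iff.mpr (Or.inr ?_)
      simp only [Function.mem_support]
      simp only [h0, if_false] at hm
      simpa using hm
  upz := fun m hm => by
    have h0 : ¬ m = 0 := by omega
    have h1 : ¬ m ≤ 0 := by omega
    simp [h0, h1]

@[simp] lemma child_k {q : ℕ} (x : TV q) (ℓ : ZMod q) : (child x ℓ).k = x.k + 1 := rfl

@[simp] lemma pred_child {q : ℕ} (x : TV q) (ℓ : ZMod q) : pred (child x ℓ) = x := by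
  apply TV.ext'
  · funext m
    simp only [pred_σ]
    by_cases hm : m ≤ 0
    · have h1 : ¬ (m - 1 = 0) := by omega
      have h2 : m - 1 ≤ 0 := by omega
      simp only [hm, if_true, child, h1, if_false, h2, if_true]
      congr 1; omega
    · simp only [hm, if_false]
      exact (x.upz m (by omega)).symm
  · show x.k + 1 - 1 = x.k; omega

lemma eq_child_of_pred_eq {q : ℕ} {x y : TV q} (h : pred y = x) : y = child x (y.σ 0) := by
  apply TV.ext'
  · funext m
    by_cases h0 : m = 0
    · simp [child, h0]
    · by_cases hm : m ≤ 0
      · have : x.σ (m + 1) = y.σ m := by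
          rw [← h]
          simp only [pred_σ]
          have h1 : m + 1 ≤ 0 := by omega
          rw [if_pos h1]
          congr 1; omega
        simp [child, h0, hm, this]
      · simp only [child, h0, if_false, hm, if_false]
        exact y.upz m (by omega)
  · have : (pred y).k = x.k := by rw [h]
    simp only [pred_k] at this
    show y.k = x.k + 1
    omega

lemma child_σ0 {q : ℕ} (x : TV q) (ℓ : ZMod q) : (child x ℓ).σ 0 = ℓ := by simp [child]

lemma child_injective {q : ℕ} (x : TV q) : Function.Injective (child x) := by
  intro a b hab
  have := congrArg (fun z => TV.σ z 0) hab
  simpa [child_σ0] using this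

lemma pred_ne_child {q : ℕ} (x : TV q) (ℓ : ZMod q) : pred x ≠ child x ℓ := by
  intro h
  have := congrArg TV.k h
  simp only [pred_k, child_k] at this
  omega
section FAlemmas

variable {p : X → X → ℝ} {nb : X → Finset X}
variable (hnn : ∀ x z, 0 ≤ p x z)
variable (h0 : ∀ x z, z ∉ nb x → p x z = 0)
variable (h1 : ∀ x, ∑ z ∈ nb x, p x z = 1)
variable {A : Set X} {y : X}

include hnn h0 in
lemma hitBefore_nonneg : ∀ (n : ℕ) (x : X), 0 ≤ hitBefore p A y n x := by
  intro n
  induction n with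
  | zero => intro x; simp only [hitBefore]; positivity
  | succ n ih =>
    intro x
    simp only [hitBefore]
    split
    · exact le_refl 0
    · exact tsum_nonneg fun z => mul_nonneg (hnn x z) (ih z)

include h0 in
lemma hitBefore_succ (n : ℕ) (x : X) :
    hitBefore p A y (n + 1) x =
      if x ∈ A then 0 else ∑ z ∈ nb x, p x z * hitBefore p A y n z := by
  simp only [hitBefore]
  split
  · rfl
  · exact tsum_eq_sum fun z hz => by rw [h0 x z hz, zero_mul]

include hnn h0 h1 in
lemma sum_hitBefore_le (hy : y ∈ A) :
    ∀ (N : ℕ) (x : X), ∑ i ∈ Finset.range N, hitBefore p A y i x ≤ 1 := by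
  intro N
  induction N with
  | zero => intro x; simp
  | succ N ih =>
    intro x
    rw [Finset.sum_range_succ']
    by_cases hx : x ∈ A
    · have hz : ∑ i ∈ Finset.range N, hitBefore p A y (i + 1) x = 0 :=
        Finset.sum_eq_zero fun i _ => by rw [hitBefore_succ h0, if_pos hx]
      rw [hz, zero_add]
      show (if x = y then (1:ℝ) else 0) ≤ 1
      split <;> norm_num
    · have hxy : x ≠ y := fun h => hx (h ▸ hy)
      have hz : ∑ i ∈ Finset.range N, hitBefore p A y (i + 1) x
          = ∑ i ∈ Finset.range N, ∑ z ∈ nb x, p x z * hitBefore p A y i z :=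
        Finset.sum_congr rfl fun i _ => by rw [hitBefore_succ h0, if_neg hx]
      have hz0 : hitBefore p A y 0 x = 0 := by
        show (if x = y then (1:ℝ) else 0) = 0
        rw [if_neg hxy]
      rw [hz, hz0, add_zero, Finset.sum_comm]
      calc ∑ z ∈ nb x, ∑ i ∈ Finset.range N, p x z * hitBefore p A y i z
          = ∑ z ∈ nb x, p x z * ∑ i ∈ Finset.range N, hitBefore p A y i z := by
            simp [Finset.mul_sum]
        _ ≤ ∑ z ∈ nb x, p x z * 1 :=
            Finset.sum_le_sum fun z _ => mul_le_mul_of_nonneg_left (ih z) (hnn x z)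
        _ = 1 := by simp [h1 x]

include hnn h0 h1 in
lemma summable_hitBefore (hy : y ∈ A) (x : X) :
    Summable fun n => hitBefore p A y n x :=
  summable_of_sum_range_le (fun n => hitBefore_nonneg hnn h0 n x)
    (fun N => sum_hitBefore_le hnn h0 h1 hy N x)

include h0 in
lemma FA_mem (hx : x ∈ A) : FA p A x y = if x = y then 1 else 0 := by
  unfold FA
  rw [tsum_eq_single 0]
  · rfl
  · intro n hn
    obtain ⟨m, rfl⟩ : ∃ m, n = m + 1 := ⟨n - 1, by omega⟩
    rw [hitBefore_succ h0, if_pos hx]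

include hnn h0 h1 in
lemma FA_rec (hy : y ∈ A) (hx : x ∉ A) :
    FA p A x y = ∑ z ∈ nb x, p x z * FA p A z y := by
  unfold FA
  rw [Summable.tsum_eq_zero_add (summable_hitBefore hnn h0 h1 hy x)]
  have hxy : x ≠ y := fun h => hx (h ▸ hy)
  have e0 : hitBefore p A y 0 x = 0 := by simp [hitBefore, hxy]
  rw [e0, zero_add]
  have e1 : ∀ n : ℕ, hitBefore p A y (n + 1) x
      = ∑ z ∈ nb x, p x z * hitBefore p A y n z :=
    fun n => by rw [hitBefore_succ h0, if_neg hx]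
  simp only [e1]
  rw [Summable.tsum_finsetSum (fun z _ => ((summable_hitBefore hnn h0 h1 hy z).mul_left (p x z)))]
  exact Finset.sum_congr rfl fun z _ => tsum_mul_left

include hnn h0 in
lemma FA_nonneg (x : X) : 0 ≤ FA p A x y :=
  tsum_nonneg fun n => hitBefore_nonneg hnn h0 n x

end FAlemmas
section Kernels

variable {q r : ℕ} {α : ℝ}

/-- Neighbor finset for the tree kernels. -/
def nbT {q : ℕ} [NeZero q] (x : TV q) : Finset (TV q) :=
  insert (pred x) (Finset.image (child x) Finset.univ)

lemma mem_nbT {q : ℕ} [NeZero q] {x z : TV q} :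
    z ∈ nbT x ↔ z = pred x ∨ ∃ ℓ, z = child x ℓ := by
  simp only [nbT, Finset.mem_insert, Finset.mem_image, Finset.mem_univ, true_and]
  constructor
  · rintro (h | ⟨ℓ, h⟩)
    · exact Or.inl h
    · exact Or.inr ⟨ℓ, h.symm⟩
  · rintro (h | ⟨ℓ, h⟩)
    · exact Or.inl h
    · exact Or.inr ⟨ℓ, h.symm⟩

lemma pred_pred_ne {q : ℕ} (x : TV q) : pred (pred x) ≠ x := by
  intro h
  have := congrArg TV.k h
  simp only [pred_k] at this
  omega

lemma p1_zero [NeZero q] {x z : TV q} (hz : z ∉ nbT x) : p1 q α x z = 0 := by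
  unfold p1
  rw [if_neg, if_neg]
  · intro h; exact hz (mem_nbT.mpr (Or.inl h))
  · intro h; exact hz (mem_nbT.mpr (Or.inr ⟨z.σ 0, eq_child_of_pred_eq h⟩))

lemma p2_zero [NeZero r] {x z : TV r} (hz : z ∉ nbT x) : p2 r α x z = 0 := by
  unfold p2
  rw [if_neg, if_neg]
  · intro h; exact hz (mem_nbT.mpr (Or.inr ⟨z.σ 0, eq_child_of_pred_eq h⟩))
  · intro h; exact hz (mem_nbT.mpr (Or.inl h))

lemma p1_pred [NeZero q] (x : TV q) : p1 q α x (pred x) = 1 - α := by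
  unfold p1
  rw [if_neg (pred_pred_ne x), if_pos rfl]

lemma p1_child [NeZero q] (x : TV q) (ℓ : ZMod q) : p1 q α x (child x ℓ) = α / q := by
  unfold p1
  rw [if_pos (pred_child x ℓ)]

lemma p2_pred [NeZero r] (x : TV r) : p2 r α x (pred x) = α := by
  unfold p2
  rw [if_pos rfl]

lemma p2_child [NeZero r] (x : TV r) (ℓ : ZMod r) : p2 r α x (child x ℓ) = (1 - α) / r := by
  unfold p2
  rw [if_neg (fun h => pred_ne_child x ℓ h.symm), if_pos (pred_child x ℓ)]

lemma sum_nbT_p1 [NeZero q] (x : TV q) (f : TV q → ℝ) :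
    ∑ z ∈ nbT x, p1 q α x z * f z
      = (1 - α) * f (pred x) + (α / q) * ∑ ℓ : ZMod q, f (child x ℓ) := by
  unfold nbT
  rw [Finset.sum_insert (by
    simp only [Finset.mem_image, Finset.mem_univ, true_and, not_exists]
    exact fun ℓ h => pred_ne_child x ℓ h.symm)]
  rw [Finset.sum_image (fun a _ b _ h => child_injective x h)]
  rw [p1_pred]
  congr 1
  rw [Finset.mul_sum]
  exact Finset.sum_congr rfl fun ℓ _ => by rw [p1_child]

lemma sum_nbT_p2 [NeZero r] (x : TV r) (f : TV r → ℝ) :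
    ∑ z ∈ nbT x, p2 r α x z * f z
      = α * f (pred x) + ((1 - α) / r) * ∑ ℓ : ZMod r, f (child x ℓ) := by
  unfold nbT
  rw [Finset.sum_insert (by
    simp only [Finset.mem_image, Finset.mem_univ, true_and, not_exists]
    exact fun ℓ h => pred_ne_child x ℓ h.symm)]
  rw [Finset.sum_image (fun a _ b _ h => child_injective x h)]
  rw [p2_pred]
  congr 1
  rw [Finset.mul_sum]
  exact Finset.sum_congr rfl fun ℓ _ => by rw [p2_child]

lemma sum_nbT_p1_one [NeZero q] (hq : 1 ≤ q) (x : TV q) :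
    ∑ z ∈ nbT x, p1 q α x z = 1 := by
  have h := sum_nbT_p1 (α := α) x (fun _ => (1:ℝ))
  simp only [mul_one, Finset.sum_const, Finset.card_univ, ZMod.card, nsmul_eq_mul] at h
  rw [h]
  have hq0 : (q : ℝ) ≠ 0 := by positivity
  field_simp
  ring

lemma sum_nbT_p2_one [NeZero r] (hr : 1 ≤ r) (x : TV r) :
    ∑ z ∈ nbT x, p2 r α x z = 1 := by
  have h := sum_nbT_p2 (α := α) x (fun _ => (1:ℝ))
  simp only [mul_one, Finset.sum_const, Finset.card_univ, ZMod.card, nsmul_eq_mul] at h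
  rw [h]
  have hr0 : (r : ℝ) ≠ 0 := by positivity
  field_simp
  ring

lemma p1_nonneg (hα0 : 0 < α) (hα1 : α < 1) (x z : TV q) : 0 ≤ p1 q α x z := by
  unfold p1
  split
  · positivity
  · split
    · linarith
    · exact le_refl 0

lemma p2_nonneg (hα0 : 0 < α) (hα1 : α < 1) (x z : TV r) : 0 ≤ p2 r α x z := by
  unfold p2
  split
  · linarith
  · split
    · have : (0:ℝ) ≤ 1 - α := by linarith
      positivity
    · exact le_refl 0

lemma tsum_p1 [NeZero q] (x : TV q) (f : TV q → ℝ) :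
    ∑' z, p1 q α x z * f z
      = (1 - α) * f (pred x) + (α / q) * ∑ ℓ : ZMod q, f (child x ℓ) := by
  rw [tsum_eq_sum (s := nbT x) (fun z hz => by rw [p1_zero hz, zero_mul])]
  exact sum_nbT_p1 x f

end Kernels
section DLKernel

variable {q r : ℕ} {α : ℝ}

lemma DL.ext' {q r : ℕ} {x y : DL q r} (h : x.val = y.val) : x = y := Subtype.ext h

/-- Neighbor of type "move up in `T_q`". -/
def dlA {q r : ℕ} (x : DL q r) (ℓ : ZMod q) : DL q r :=
  ⟨(child x.val.1 ℓ, pred x.val.2), by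
    have := x.property
    show x.val.1.k + 1 + (x.val.2.k - 1) = 0
    omega⟩

/-- Neighbor of type "move up in `T_r`". -/
def dlB {q r : ℕ} (x : DL q r) (ℓ : ZMod r) : DL q r :=
  ⟨(pred x.val.1, child x.val.2 ℓ), by
    have := x.property
    show x.val.1.k - 1 + (x.val.2.k + 1) = 0
    omega⟩

def nbDL {q r : ℕ} [NeZero q] [NeZero r] (x : DL q r) : Finset (DL q r) :=
  (Finset.image (dlA x) Finset.univ) ∪ (Finset.image (dlB x) Finset.univ)

lemma dlA_injective (x : DL q r) : Function.Injective (dlA x) := by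
  intro a b h
  exact child_injective x.val.1 (congrArg (fun z => z.val.1) h)

lemma dlB_injective (x : DL q r) : Function.Injective (dlB x) := by
  intro a b h
  exact child_injective x.val.2 (congrArg (fun z => z.val.2) h)

lemma dlA_ne_dlB (x : DL q r) (ℓ : ZMod q) (m : ZMod r) : dlA x ℓ ≠ dlB x m := by
  intro h
  have := congrArg (fun z => z.val.1.k) h
  simp only [dlA, dlB, child_k, pred_k] at this
  omega

lemma pDL_zero [NeZero q] [NeZero r] {x z : DL q r} (hz : z ∉ nbDL x) :
    pDL q r α x z = 0 := by
  unfold pDL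
  rw [if_neg, if_neg]
  · rintro ⟨hz1, hz2⟩
    apply hz
    simp only [nbDL, Finset.mem_union, Finset.mem_image, Finset.mem_univ, true_and]
    right
    refine ⟨z.val.2.σ 0, ?_⟩
    apply DL.ext'
    show (pred x.val.1, child x.val.2 (z.val.2.σ 0)) = z.val
    rw [← hz1, ← eq_child_of_pred_eq hz2]
  · rintro ⟨hz1, hz2⟩
    apply hz
    simp only [nbDL, Finset.mem_union, Finset.mem_image, Finset.mem_univ, true_and]
    left
    refine ⟨z.val.1.σ 0, ?_⟩
    apply DL.ext'
    show (child x.val.1 (z.val.1.σ 0), pred x.val.2) = z.val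
    rw [← hz2, ← eq_child_of_pred_eq hz1]

lemma pDL_dlA [NeZero q] [NeZero r] (x : DL q r) (ℓ : ZMod q) :
    pDL q r α x (dlA x ℓ) = α / q := by
  unfold pDL
  rw [if_pos ⟨pred_child x.val.1 ℓ, rfl⟩]

lemma pDL_dlB [NeZero q] [NeZero r] (x : DL q r) (ℓ : ZMod r) :
    pDL q r α x (dlB x ℓ) = (1 - α) / r := by
  unfold pDL
  rw [if_neg, if_pos ⟨rfl, pred_child x.val.2 ℓ⟩]
  rintro ⟨h1, -⟩
  exact pred_pred_ne x.val.1 h1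

lemma tsum_pDL [NeZero q] [NeZero r] (x : DL q r) (f : DL q r → ℝ) :
    ∑' y, pDL q r α x y * f y
      = (α / q) * ∑ ℓ : ZMod q, f (dlA x ℓ)
        + ((1 - α) / r) * ∑ ℓ : ZMod r, f (dlB x ℓ) := by
  rw [tsum_eq_sum (s := nbDL x) (fun z hz => by rw [pDL_zero hz, zero_mul])]
  unfold nbDL
  rw [Finset.sum_union (by
    rw [Finset.disjoint_left]
    intro a ha hb
    simp only [Finset.mem_image, Finset.mem_univ, true_and] at ha hb
    obtain ⟨ℓ, rfl⟩ := ha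
    obtain ⟨m, hm⟩ := hb
    exact dlA_ne_dlB x ℓ m hm.symm)]
  rw [Finset.sum_image (fun a _ b _ h => dlA_injective x h),
    Finset.sum_image (fun a _ b _ h => dlB_injective x h)]
  congr 1
  · rw [Finset.mul_sum]
    exact Finset.sum_congr rfl fun ℓ _ => by rw [pDL_dlA]
  · rw [Finset.mul_sum]
    exact Finset.sum_congr rfl fun ℓ _ => by rw [pDL_dlB]

end DLKernel
section S1lemmas

variable {q : ℕ} {n : ℕ}

lemma root_mem_S1 (q n : ℕ) : rootAt q (-(n:ℤ)) ∈ S1 q n := by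
  refine ⟨le_refl _, by show -(n:ℤ) ≤ (n:ℤ); omega, ?_⟩
  have : ((rootAt q (-(n:ℤ))).k + (n:ℤ)).toNat = 0 := by
    show ((-(n:ℤ)) + (n:ℤ)).toNat = 0
    omega
  rw [this]
  rfl

lemma S1_eq_root {x : TV q} (hx : x ∈ S1 q n) (hk : x.k = -(n:ℤ)) :
    x = rootAt q (-(n:ℤ)) := by
  have h3 := hx.2.2
  rwa [show (x.k + (n:ℤ)).toNat = 0 by omega, Function.iterate_zero_apply] at h3

lemma child_mem_S1 {x : TV q} (hx : x ∈ S1 q n) (hk : x.k < (n:ℤ)) (ℓ : ZMod q) :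
    child x ℓ ∈ S1 q n := by
  have h1 := hx.1
  refine ⟨by simp only [child_k]; omega, by simp only [child_k]; omega, ?_⟩
  have e : ((child x ℓ).k + (n:ℤ)).toNat = (x.k + (n:ℤ)).toNat + 1 := by
    simp only [child_k]; omega
  rw [e, Function.iterate_succ_apply, pred_child]
  exact hx.2.2

lemma pred_mem_S1 {x : TV q} (hx : x ∈ S1 q n) (hk : -(n:ℤ) < x.k) :
    pred x ∈ S1 q n := by
  have h1 := hx.1
  refine ⟨by simp only [pred_k]; omega, by simp only [pred_k]; have := hx.2.1; omega, ?_⟩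
  have e : (x.k + (n:ℤ)).toNat = ((pred x).k + (n:ℤ)).toNat + 1 := by
    simp only [pred_k]; omega
  have h3 := hx.2.2
  rwa [e, Function.iterate_succ_apply] at h3

lemma iterate_pred_σ (x : TV q) (t : ℕ) (m : ℤ) :
    (pred^[t] x).σ m = if m ≤ 0 then x.σ (m - t) else 0 := by
  induction t generalizing m with
  | zero =>
    simp only [Function.iterate_zero_apply, Nat.cast_zero, sub_zero]
    split
    · rfl
    · exact x.upz m (by omega)
  | succ t ih =>
    rw [Function.iterate_succ_apply']
    simp only [pred_σ]
    by_cases hm : m ≤ 0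
    · rw [if_pos hm, ih (m-1), if_pos (by omega : m - 1 ≤ 0)]
      rw [if_pos hm]
      congr 1
      push_cast
      ring
    · rw [if_neg hm, if_neg hm]

lemma S1_supp {x : TV q} (hx : x ∈ S1 q n) {m : ℤ} (hm : m ≤ -(x.k + (n:ℤ))) :
    x.σ m = 0 := by
  by_cases hm0 : m ≤ 0
  · have h3 := hx.2.2
    have h1 := hx.1
    have := congrArg (fun z => TV.σ z (m + (x.k + (n:ℤ)))) h3
    simp only [iterate_pred_σ, rootAt] at this
    rw [if_pos (by omega : m + (x.k + (n:ℤ)) ≤ 0)] at this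
    have e : m + (x.k + (n:ℤ)) - ((x.k + (n:ℤ)).toNat : ℤ) = m := by omega
    rwa [e] at this
  · exact x.upz m (by omega)

lemma S1_finite (q n : ℕ) (hq : 1 ≤ q) : (S1 q n).Finite := by
  have : NeZero q := ⟨by omega⟩
  classical
  set T := ((Finset.Icc (-(2*(n:ℤ))) 0 : Finset ℤ) → ZMod q) × ℤ
  have hfin : (Set.univ ×ˢ Set.Icc (-(n:ℤ)) (n:ℤ) :
      Set (((Finset.Icc (-(2*(n:ℤ))) 0 : Finset ℤ) → ZMod q) × ℤ)).Finite :=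
    Set.Finite.prod Set.finite_univ (Set.finite_Icc _ _)
  apply Set.Finite.of_finite_image (f := fun x : TV q =>
    ((fun m : (Finset.Icc (-(2*(n:ℤ))) 0 : Finset ℤ) => x.σ m.val, x.k) : T))
  · apply hfin.subset
    rintro _ ⟨x, hx, rfl⟩
    exact ⟨Set.mem_univ _, hx.1, hx.2.1⟩
  · intro x hx y hy hxy
    simp only [Prod.mk.injEq] at hxy
    apply TV.ext' _ hxy.2
    funext m
    by_cases hm : m ∈ Finset.Icc (-(2*(n:ℤ))) 0
    · exact congrFun hxy.1 ⟨m, hm⟩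
    · simp only [Finset.mem_Icc, not_and_or, not_le] at hm
      rcases hm with hm | hm
      · rw [S1_supp hx (by have := hx.2.1; omega),
          S1_supp hy (by have := hy.2.1; omega)]
      · rw [x.upz m hm, y.upz m hm]

lemma Sdl_finite (q r n : ℕ) (hq : 1 ≤ q) (hr : 1 ≤ r) : (Sdl q r n).Finite := by
  apply Set.Finite.of_finite_image (f := fun x : DL q r => x.val)
  · exact (Set.Finite.prod (S1_finite q n hq) (S1_finite r n hr)).subset
      (by rintro _ ⟨x, hx, rfl⟩; exact ⟨hx.1, hx.2⟩)
  · exact fun a _ b _ h => Subtype.ext h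

lemma S1leaves_finite (q n : ℕ) (hq : 1 ≤ q) : (S1leaves q n).Finite :=
  (S1_finite q n hq).subset fun x hx => hx.1

end S1lemmas
section Interior

variable {q r n : ℕ}

lemma Sbd_sub_Sdl (hn : 1 ≤ n) : Sbd q r n ⊆ Sdl q r n := by
  rintro x (⟨h1, h2⟩ | ⟨h1, h2⟩)
  · refine ⟨h1.1, ?_⟩
    rw [h2]; exact root_mem_S1 r n
  · refine ⟨?_, h2.1⟩
    rw [h1]; exact root_mem_S1 q n

lemma interior_k {x : DL q r} (hx : x ∈ Sdl q r n) (hxb : x ∉ Sbd q r n) :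
    -(n:ℤ) < x.val.1.k ∧ x.val.1.k < (n:ℤ) := by
  have hp : x.val.1.k + x.val.2.k = 0 := x.property
  have h1 := hx.1.1
  have h2 := hx.1.2.1
  constructor
  · by_contra hc
    have hk : x.val.1.k = -(n:ℤ) := by omega
    apply hxb
    right
    refine ⟨S1_eq_root hx.1 hk, hx.2, by omega⟩
  · by_contra hc
    have hk : x.val.1.k = (n:ℤ) := by omega
    apply hxb
    left
    refine ⟨⟨hx.1, hk⟩, S1_eq_root hx.2 (by omega)⟩

lemma interior_nbd1 {x : DL q r} (hx : x ∈ Sdl q r n) (hxb : x ∉ Sbd q r n) :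
    x.val.1 ∉ S1bd q n := by
  obtain ⟨hl, hu⟩ := interior_k hx hxb
  rintro (h | h)
  · have := congrArg TV.k h
    simp only [rootAt] at this
    omega
  · exact absurd h.2 (by omega)

lemma interior_nbd2 {x : DL q r} (hx : x ∈ Sdl q r n) (hxb : x ∉ Sbd q r n) :
    x.val.2 ∉ S1bd r n := by
  obtain ⟨hl, hu⟩ := interior_k hx hxb
  have hp : x.val.1.k + x.val.2.k = 0 := x.property
  rintro (h | h)
  · have := congrArg TV.k h
    simp only [rootAt] at this
    omega
  · exact absurd h.2 (by omega)

lemma dlA_mem {x : DL q r} (hx : x ∈ Sdl q r n) (hxb : x ∉ Sbd q r n) (ℓ : ZMod q) :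
    dlA x ℓ ∈ Sdl q r n := by
  obtain ⟨hl, hu⟩ := interior_k hx hxb
  have hp : x.val.1.k + x.val.2.k = 0 := x.property
  exact ⟨child_mem_S1 hx.1 hu ℓ, pred_mem_S1 hx.2 (by omega)⟩

lemma dlB_mem {x : DL q r} (hx : x ∈ Sdl q r n) (hxb : x ∉ Sbd q r n) (ℓ : ZMod r) :
    dlB x ℓ ∈ Sdl q r n := by
  obtain ⟨hl, hu⟩ := interior_k hx hxb
  have hp : x.val.1.k + x.val.2.k = 0 := x.property
  exact ⟨pred_mem_S1 hx.1 hl, child_mem_S1 hx.2 (by omega) ℓ⟩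

lemma max_principle (q r n : ℕ) [NeZero q] [NeZero r] (hq : 2 ≤ q) (hr : 2 ≤ r) {α : ℝ}
    (hα0 : 0 < α) (hα1 : α < 1) (v : DL q r → ℝ)
    (hv : ∀ x ∈ Sdl q r n, x ∉ Sbd q r n →
      v x = (α / q) * ∑ ℓ : ZMod q, v (dlA x ℓ)
        + ((1 - α) / r) * ∑ ℓ : ZMod r, v (dlB x ℓ))
    (hb : ∀ x ∈ Sbd q r n, v x = 0) :
    ∀ x ∈ Sdl q r n, v x ≤ 0 := by
  intro x hx
  obtain ⟨m, hmS, hm⟩ := Set.exists_max_image (Sdl q r n) v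
    (Sdl_finite q r n (by omega) (by omega)) ⟨x, hx⟩
  set M := v m with hM
  suffices hM0 : M ≤ 0 from le_trans (hm x hx) hM0
  have hAfin : ({z | z ∈ Sdl q r n ∧ v z = M}).Finite :=
    (Sdl_finite q r n (by omega) (by omega)).subset fun z hz => hz.1
  obtain ⟨w, ⟨hwS, hwv⟩, hw⟩ := Set.exists_max_image _ (fun z : DL q r => z.val.1.k)
    hAfin ⟨m, hmS, rfl⟩
  by_cases hwb : w ∈ Sbd q r n
  · rw [← hwv, hb w hwb]
  · exfalso
    have hrec := hv w hwS hwb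
    have hq0 : (0:ℝ) < (q:ℝ) := by positivity
    have hr0 : (0:ℝ) < (r:ℝ) := by positivity
    set SA := ∑ ℓ : ZMod q, (M - v (dlA w ℓ)) with hSA
    set SB := ∑ ℓ : ZMod r, (M - v (dlB w ℓ)) with hSB
    have hSAnn : 0 ≤ SA :=
      Finset.sum_nonneg fun ℓ _ => sub_nonneg.mpr (hm _ (dlA_mem hwS hwb ℓ))
    have hSBnn : 0 ≤ SB :=
      Finset.sum_nonneg fun ℓ _ => sub_nonneg.mpr (hm _ (dlB_mem hwS hwb ℓ))
    have eA : ∑ ℓ : ZMod q, v (dlA w ℓ) = (q:ℝ) * M - SA := by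
      rw [hSA, Finset.sum_sub_distrib, Finset.sum_const, Finset.card_univ, ZMod.card,
        nsmul_eq_mul]
      ring
    have eB : ∑ ℓ : ZMod r, v (dlB w ℓ) = (r:ℝ) * M - SB := by
      rw [hSB, Finset.sum_sub_distrib, Finset.sum_const, Finset.card_univ, ZMod.card,
        nsmul_eq_mul]
      ring
    rw [eA, eB, hwv] at hrec
    have hzero : (α / q) * SA + ((1 - α) / r) * SB = 0 := by
      field_simp at hrec ⊢
      nlinarith [hrec]
    have hcA : 0 < α / (q:ℝ) := by positivity
    have hcB : 0 < (1 - α) / (r:ℝ) := by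
      have : (0:ℝ) < 1 - α := by linarith
      positivity
    have hSA0 : SA = 0 := by
      nlinarith [mul_nonneg hcA.le hSAnn, mul_nonneg hcB.le hSBnn]
    have hterm : ∀ ℓ : ZMod q, M - v (dlA w ℓ) = 0 := fun ℓ =>
      (Finset.sum_eq_zero_iff_of_nonneg
        (fun ℓ _ => sub_nonneg.mpr (hm _ (dlA_mem hwS hwb ℓ)))).mp hSA0 ℓ (Finset.mem_univ ℓ)
    have hmemA : dlA w 0 ∈ {z | z ∈ Sdl q r n ∧ v z = M} :=
      ⟨dlA_mem hwS hwb 0, by have := hterm 0; linarith⟩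
    have := hw (dlA w 0) hmemA
    simp only [dlA, child_k] at this
    omega
end Interior
/-- decomposition of functions harmonic in the interior of `S^{(n)}`. -/
theorem finite_split (q r : ℕ) (hq : 2 ≤ q) (hr : 2 ≤ r) (α : ℝ)
    (hα0 : 0 < α) (hα1 : α < 1) (n : ℕ) (hn : 1 ≤ n) (h : DL q r → ℝ)
    (hharm : ∀ x ∈ Sdl q r n, x ∉ Sbd q r n → ∑' y, pDL q r α x y * h y = h x) :
    ∀ x ∈ Sdl q r n,
      h x =
        (∑' y : {y : TV q // y ∈ S1leaves q n},
            FA (p1 q α) (S1bd q n) x.val.1 y.val * h (liftLeaf1 q r n y.val y.property)) +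
        (∑' y : {y : TV r // y ∈ S1leaves r n},
            FA (p2 r α) (S1bd r n) x.val.2 y.val * h (liftLeaf2 q r n y.val y.property)) := by
  haveI : NeZero q := ⟨by omega⟩
  haveI : NeZero r := ⟨by omega⟩
  haveI : Fintype {y : TV q // y ∈ S1leaves q n} := (S1leaves_finite q n (by omega)).fintype
  haveI : Fintype {y : TV r // y ∈ S1leaves r n} := (S1leaves_finite r n (by omega)).fintype
  have hq0 : ((q:ℝ)) ≠ 0 := by positivity
  have hr0 : ((r:ℝ)) ≠ 0 := by positivity
  set c1 : {y : TV q // y ∈ S1leaves q n} → ℝ :=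
    fun y => h (liftLeaf1 q r n y.val y.property) with hc1
  set c2 : {y : TV r // y ∈ S1leaves r n} → ℝ :=
    fun y => h (liftLeaf2 q r n y.val y.property) with hc2
  set H1 : TV q → ℝ := fun z =>
    ∑' y : {y : TV q // y ∈ S1leaves q n}, FA (p1 q α) (S1bd q n) z y.val * c1 y with hH1def
  set H2 : TV r → ℝ := fun z =>
    ∑' y : {y : TV r // y ∈ S1leaves r n}, FA (p2 r α) (S1bd r n) z y.val * c2 y with hH2def
  have hH1 : ∀ z, H1 z =
      ∑ y : {y : TV q // y ∈ S1leaves q n}, FA (p1 q α) (S1bd q n) z y.val * c1 y :=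
    fun z => tsum_fintype _
  have hH2 : ∀ z, H2 z =
      ∑ y : {y : TV r // y ∈ S1leaves r n}, FA (p2 r α) (S1bd r n) z y.val * c2 y :=
    fun z => tsum_fintype _
  -- kernel facts
  have hnn1 : ∀ x z : TV q, 0 ≤ p1 q α x z := p1_nonneg hα0 hα1
  have h01 : ∀ x z : TV q, z ∉ nbT x → p1 q α x z = 0 := fun x z hz => p1_zero hz
  have h11 : ∀ x : TV q, ∑ z ∈ nbT x, p1 q α x z = 1 := sum_nbT_p1_one (by omega)
  have hnn2 : ∀ x z : TV r, 0 ≤ p2 r α x z := p2_nonneg hα0 hα1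
  have h02 : ∀ x z : TV r, z ∉ nbT x → p2 r α x z = 0 := fun x z hz => p2_zero hz
  have h12 : ∀ x : TV r, ∑ z ∈ nbT x, p2 r α x z = 1 := sum_nbT_p2_one (by omega)
  have hleaf1 : ∀ y : {y : TV q // y ∈ S1leaves q n}, y.val ∈ S1bd q n :=
    fun y => Or.inr y.property
  have hleaf2 : ∀ y : {y : TV r // y ∈ S1leaves r n}, y.val ∈ S1bd r n :=
    fun y => Or.inr y.property
  -- harmonicity of H1 off the tree boundary
  have h1harm : ∀ z : TV q, z ∉ S1bd q n →
      ∑ w ∈ nbT z, p1 q α z w * H1 w = H1 z := by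
    intro z hz
    rw [hH1 z]
    calc ∑ w ∈ nbT z, p1 q α z w * H1 w
        = ∑ w ∈ nbT z, ∑ y : {y : TV q // y ∈ S1leaves q n},
            p1 q α z w * FA (p1 q α) (S1bd q n) w y.val * c1 y := by
          refine Finset.sum_congr rfl fun w _ => ?_
          rw [hH1 w, Finset.mul_sum]
          exact Finset.sum_congr rfl fun y _ => by ring
      _ = ∑ y : {y : TV q // y ∈ S1leaves q n},
            (∑ w ∈ nbT z, p1 q α z w * FA (p1 q α) (S1bd q n) w y.val) * c1 y := by
          rw [Finset.sum_comm]
          exact Finset.sum_congr rfl fun y _ => by rw [Finset.sum_mul]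
      _ = ∑ y : {y : TV q // y ∈ S1leaves q n},
            FA (p1 q α) (S1bd q n) z y.val * c1 y := by
          refine Finset.sum_congr rfl fun y _ => ?_
          rw [← FA_rec hnn1 h01 h11 (hleaf1 y) hz]
  have h2harm : ∀ z : TV r, z ∉ S1bd r n →
      ∑ w ∈ nbT z, p2 r α z w * H2 w = H2 z := by
    intro z hz
    rw [hH2 z]
    calc ∑ w ∈ nbT z, p2 r α z w * H2 w
        = ∑ w ∈ nbT z, ∑ y : {y : TV r // y ∈ S1leaves r n},
            p2 r α z w * FA (p2 r α) (S1bd r n) w y.val * c2 y := by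
          refine Finset.sum_congr rfl fun w _ => ?_
          rw [hH2 w, Finset.mul_sum]
          exact Finset.sum_congr rfl fun y _ => by ring
      _ = ∑ y : {y : TV r // y ∈ S1leaves r n},
            (∑ w ∈ nbT z, p2 r α z w * FA (p2 r α) (S1bd r n) w y.val) * c2 y := by
          rw [Finset.sum_comm]
          exact Finset.sum_congr rfl fun y _ => by rw [Finset.sum_mul]
      _ = ∑ y : {y : TV r // y ∈ S1leaves r n},
            FA (p2 r α) (S1bd r n) z y.val * c2 y := by
          refine Finset.sum_congr rfl fun y _ => ?_
          rw [← FA_rec hnn2 h02 h12 (hleaf2 y) hz]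
  -- the candidate decomposition
  set g : DL q r → ℝ := fun z => H1 z.val.1 + H2 z.val.2 with hg
  -- boundary values
  have hbd : ∀ x ∈ Sbd q r n, g x = h x := by
    rintro x (⟨hx1, hx2⟩ | ⟨hx1, hx2⟩)
    · have e1 : H1 x.val.1 = h x := by
        rw [hH1]
        rw [Finset.sum_eq_single (⟨x.val.1, hx1⟩ : {y : TV q // y ∈ S1leaves q n})]
        · rw [FA_mem h01 (Or.inr hx1), if_pos rfl, one_mul]
          show h (liftLeaf1 q r n x.val.1 hx1) = h x
          congr 1
          apply DL.ext'
          show (x.val.1, rootAt r (-(n:ℤ))) = x.val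
          exact Prod.ext rfl hx2.symm
        · intro y _ hy
          rw [FA_mem h01 (Or.inr hx1), if_neg, zero_mul]
          intro hc
          exact hy (Subtype.ext hc.symm)
        · intro habs
          exact absurd (Finset.mem_univ _) habs
      have e2 : H2 x.val.2 = 0 := by
        rw [hH2]
        apply Finset.sum_eq_zero
        intro y _
        rw [hx2, FA_mem h02 (Or.inl rfl), if_neg, zero_mul]
        intro hc
        have hk := congrArg TV.k hc
        have hyk := y.property.2
        simp only [rootAt] at hk
        omega
      show H1 x.val.1 + H2 x.val.2 = h x
      rw [e1, e2, add_zero]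
    · have e1 : H1 x.val.1 = 0 := by
        rw [hH1]
        apply Finset.sum_eq_zero
        intro y _
        rw [hx1, FA_mem h01 (Or.inl rfl), if_neg, zero_mul]
        intro hc
        have hk := congrArg TV.k hc
        have hyk := y.property.2
        simp only [rootAt] at hk
        omega
      have e2 : H2 x.val.2 = h x := by
        rw [hH2]
        rw [Finset.sum_eq_single (⟨x.val.2, hx2⟩ : {y : TV r // y ∈ S1leaves r n})]
        · rw [FA_mem h02 (Or.inr hx2), if_pos rfl, one_mul]
          show h (liftLeaf2 q r n x.val.2 hx2) = h x
          congr 1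
          apply DL.ext'
          show (rootAt q (-(n:ℤ)), x.val.2) = x.val
          exact Prod.ext hx1.symm rfl
        · intro y _ hy
          rw [FA_mem h02 (Or.inr hx2), if_neg, zero_mul]
          intro hc
          exact hy (Subtype.ext hc.symm)
        · intro habs
          exact absurd (Finset.mem_univ _) habs
      show H1 x.val.1 + H2 x.val.2 = h x
      rw [e1, e2, zero_add]
  -- interior recursion for g
  have hgrec : ∀ x ∈ Sdl q r n, x ∉ Sbd q r n →
      g x = (α / q) * ∑ ℓ : ZMod q, g (dlA x ℓ)
        + ((1 - α) / r) * ∑ ℓ : ZMod r, g (dlB x ℓ) := by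
    intro x hx hxb
    have e1 : H1 x.val.1
        = (1 - α) * H1 (pred x.val.1) + (α / q) * ∑ ℓ : ZMod q, H1 (child x.val.1 ℓ) := by
      rw [← h1harm x.val.1 (interior_nbd1 hx hxb), sum_nbT_p1]
    have e2 : H2 x.val.2
        = α * H2 (pred x.val.2) + ((1 - α) / r) * ∑ ℓ : ZMod r, H2 (child x.val.2 ℓ) := by
      rw [← h2harm x.val.2 (interior_nbd2 hx hxb), sum_nbT_p2]
    have eA : ∑ ℓ : ZMod q, g (dlA x ℓ)
        = (∑ ℓ : ZMod q, H1 (child x.val.1 ℓ)) + (q : ℝ) * H2 (pred x.val.2) := by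
      show ∑ ℓ : ZMod q, (H1 (child x.val.1 ℓ) + H2 (pred x.val.2)) = _
      rw [Finset.sum_add_distrib, Finset.sum_const, Finset.card_univ, ZMod.card,
        nsmul_eq_mul]
    have eB : ∑ ℓ : ZMod r, g (dlB x ℓ)
        = (r : ℝ) * H1 (pred x.val.1) + (∑ ℓ : ZMod r, H2 (child x.val.2 ℓ)) := by
      show ∑ ℓ : ZMod r, (H1 (pred x.val.1) + H2 (child x.val.2 ℓ)) = _
      rw [Finset.sum_add_distrib, Finset.sum_const, Finset.card_univ, ZMod.card,
        nsmul_eq_mul]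
    show H1 x.val.1 + H2 x.val.2 = _
    rw [eA, eB, e1, e2]
    field_simp
    ring
  -- interior recursion for h
  have hhrec : ∀ x ∈ Sdl q r n, x ∉ Sbd q r n →
      h x = (α / q) * ∑ ℓ : ZMod q, h (dlA x ℓ)
        + ((1 - α) / r) * ∑ ℓ : ZMod r, h (dlB x ℓ) := by
    intro x hx hxb
    rw [← hharm x hx hxb, tsum_pDL]
  -- two applications of the maximum principle
  have hle1 : ∀ x ∈ Sdl q r n, h x - g x ≤ 0 := by
    apply max_principle q r n hq hr hα0 hα1
    · intro x hx hxb
      rw [hhrec x hx hxb, hgrec x hx hxb]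
      rw [Finset.sum_sub_distrib, Finset.sum_sub_distrib]
      ring
    · intro x hxb
      rw [hbd x hxb]
      ring
  have hle2 : ∀ x ∈ Sdl q r n, g x - h x ≤ 0 := by
    apply max_principle q r n hq hr hα0 hα1
    · intro x hx hxb
      rw [hhrec x hx hxb, hgrec x hx hxb]
      rw [Finset.sum_sub_distrib, Finset.sum_sub_distrib]
      ring
    · intro x hxb
      rw [hbd x hxb]
      ring
  intro x hx
  have := hle1 x hx
  have := hle2 x hx
  show h x = H1 x.val.1 + H2 x.val.2
  show h x = g x
  linarith

end LampDL
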